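/- In the sl(N) Onsager algebra A_N (N ≥ 4), [e_1, S_N(N)] = S_1(N+1), where S_k(r) denotes the right-nested string commutator. -/

import Mathlib

noncomputable section

/-- The generalized Dolan–Grady relations for a cyclic family `e` of `N` elements. -/
def DolanGrady {N : ℕ} [NeZero N] {L : Type*} [LieRing L] (e : Fin N → L) : Prop :=
  (∀ i j : Fin N, (j = i + 1 ∨ i = j + 1) → ⁅e i, ⁅e i, e j⁆⁆ = e j) ∧
  (∀ i j : Fin N, i ≠ j → j ≠ i + 1 → i ≠ j + 1 → ⁅e i, e j⁆ = 0)

/-- The right-nested string `S_k(r) = [e_k,[e_{k+1},...,e_{k+r-1}]...]`, with `S _ 0 = 0`. -/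
def S {N : ℕ} [NeZero N] {L : Type*} [LieRing L] (e : Fin N → L) : ℕ → Fin N → L
  | 0, _ => 0
  | 1, k => e k
  | (r + 2), k => ⁅e k, S e (r + 1) (k + 1)⁆


open Fin.NatCast

/-!
Write `S_0(N) = [e_0, [e_1, [e_2, T]]]` with `T = S_3(N-3)`; `T` commutes with `e_1`, since
its letters are `e_3, …, e_{N-1}`. Expanding `[e_1, S_0(N)]` by the Jacobi identity and the
Dolan–Grady relations leaves `[e_1, [e_2, [u, T]]]` with `u = [e_1, e_0]`, up to the term
`[e_1, [e_0, [e_1, e_2]]]`, which equals its own negative and so vanishes in characteristic zero.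
Finally `u` commutes with `e_3, …, e_{N-2}` and sends `e_{N-1}` to `[e_{N-1}, [e_0, e_1]]`, so
`[u, T] = S_3(N-1)` and `[e_1, [e_2, [u, T]]] = S_1(N+1)`.
-/

section LieRing

variable {L : Type*} [LieRing L]

lemma lie_lie_lie_eq_zero_of_lie_lie_self [IsAddTorsionFree L] {x y z : L}
    (hyx : ⁅y, ⁅y, x⁆⁆ = x) (hyz : ⁅y, ⁅y, z⁆⁆ = z) (hxz : ⁅x, z⁆ = 0) :
    ⁅y, ⁅x, ⁅y, z⁆⁆⁆ = 0 := by
  have hyxz : ⁅⁅y, x⁆, z⁆ = -⁅x, ⁅y, z⁆⁆ := by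
    rw [lie_lie, hxz, lie_zero, zero_sub]
  have hyxy : ⁅⁅y, x⁆, y⁆ = -x := by
    rw [← lie_skew, hyx]
  refine self_eq_neg.mp ?_
  calc ⁅y, ⁅x, ⁅y, z⁆⁆⁆ = ⁅⁅y, x⁆, ⁅y, z⁆⁆ := by
        rw [leibniz_lie, hyz, hxz, add_zero]
    _ = -⁅y, ⁅x, ⁅y, z⁆⁆⁆ := by
        rw [leibniz_lie, hyxy, hyxz, neg_lie, hxz, lie_neg, neg_zero, zero_add]

lemma lie_lie_lie_lie_eq_lie_lie_lie {x y z T : L}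
    (hyx : ⁅y, ⁅y, x⁆⁆ = x) (hyz : ⁅y, ⁅y, z⁆⁆ = z) (hxz : ⁅x, z⁆ = 0) (hyT : ⁅y, T⁆ = 0)
    (hyw : ⁅y, ⁅x, ⁅y, z⁆⁆⁆ = 0) :
    ⁅y, ⁅x, ⁅y, ⁅z, T⁆⁆⁆⁆ = ⁅y, ⁅z, ⁅⁅y, x⁆, T⁆⁆⁆ := by
  set u := ⁅y, x⁆
  have hyZ : ⁅y, ⁅y, ⁅z, T⁆⁆⁆ = ⁅z, T⁆ := by
    rw [leibniz_lie y z T, hyT, lie_zero, add_zero, leibniz_lie, hyz, hyT, lie_zero, add_zero]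
  have huy : ⁅u, y⁆ = -x := by
    rw [← lie_skew, hyx]
  have huz : ⁅u, z⁆ = -⁅x, ⁅y, z⁆⁆ := by
    rw [lie_lie, hxz, lie_zero, zero_sub]
  have hywT : ⁅y, ⁅⁅x, ⁅y, z⁆⁆, T⁆⁆ = 0 := by
    rw [leibniz_lie, hyw, hyT, zero_lie, lie_zero, add_zero]
  calc ⁅y, ⁅x, ⁅y, ⁅z, T⁆⁆⁆⁆ = ⁅u, ⁅y, ⁅z, T⁆⁆⁆ + ⁅x, ⁅z, T⁆⁆ := by
        rw [leibniz_lie, hyZ]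
    _ = ⁅y, ⁅u, ⁅z, T⁆⁆⁆ := by
        rw [leibniz_lie u y, huy, neg_lie, neg_add_cancel_comm]
    _ = ⁅y, ⁅z, ⁅u, T⁆⁆⁆ := by
        rw [leibniz_lie u z, huz, neg_lie, lie_add, lie_neg, hywT, neg_zero, zero_add]

end LieRing

lemma Fin.natCast_ne_natCast_of_lt {N : ℕ} [NeZero N] {a b : ℕ} (hab : a < b) (hba : b < a + N) :
    (a : Fin N) ≠ b := by
  intro h
  have hmod : a % N = b % N := by simpa [Fin.ext_iff] using h
  have hdvd : N ∣ b - a := (Nat.modEq_iff_dvd' hab.le).mp hmod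
  have := Nat.eq_zero_of_dvd_of_lt hdvd (by omega)
  omega

section NestedString

variable {N : ℕ} [NeZero N] {L : Type*} [LieRing L] (e : Fin N → L)

lemma S_add_two_natCast (r j : ℕ) : S e (r + 2) (j : Fin N) = ⁅e j, S e (r + 1) ↑(j + 1)⁆ := by
  rw [Nat.cast_succ]
  rfl

lemma lie_S_eq_zero {x : L} {m j : ℕ} (h : ∀ i, j ≤ i → i < j + m → ⁅x, e i⁆ = 0) :
    ⁅x, S e m (j : Fin N)⁆ = 0 := by
  induction m generalizing j with
  | zero => simp [S]
  | succ m ih =>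
    cases m with
    | zero => exact h j le_rfl (by omega)
    | succ r =>
      rw [S_add_two_natCast, leibniz_lie, h j le_rfl (by omega),
        ih fun i hi hi' => h i (by omega) (by omega), zero_lie, lie_zero, add_zero]

lemma lie_S_eq_S_of_lie_last {x : L} {n m j : ℕ} (hcomm : ∀ i, j ≤ i → i < j + m → ⁅x, e i⁆ = 0)
    (hlast : ⁅x, e ↑(j + m)⁆ = S e (n + 1) ↑(j + m)) :
    ⁅x, S e (m + 1) (j : Fin N)⁆ = S e (m + n + 1) j := by
  induction m generalizing j with
  | zero => simpa [S] using hlast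
  | succ m ih =>
    have hlast' : ⁅x, e ↑(j + 1 + m)⁆ = S e (n + 1) ↑(j + 1 + m) := by
      rwa [add_right_comm, add_assoc]
    rw [S_add_two_natCast, leibniz_lie, hcomm j le_rfl (by omega), zero_lie, zero_add,
      ih (fun i hi hi' => hcomm i (by omega) (by omega)) hlast', add_right_comm m 1 n,
      S_add_two_natCast]

namespace DolanGrady

variable {e} (hDG : DolanGrady e)
include hDG

lemma lie_natCast_eq_zero {a b : ℕ} (hab : a + 2 ≤ b) (hba : b + 2 ≤ a + N) :
    ⁅e a, e b⁆ = 0 := by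
  refine hDG.2 a b (Fin.natCast_ne_natCast_of_lt (by omega) (by omega)) ?_ ?_
  · rw [← Nat.cast_succ]
    exact (Fin.natCast_ne_natCast_of_lt (by omega) (by omega)).symm
  · rw [← Nat.cast_succ]
    exact Fin.natCast_ne_natCast_of_lt (by omega) (by omega)

lemma lie_lie_add_one (k : Fin N) : ⁅e k, ⁅e k, e (k + 1)⁆⁆ = e (k + 1) :=
  hDG.1 k (k + 1) (.inl rfl)

lemma add_one_lie_lie (k : Fin N) : ⁅e (k + 1), ⁅e (k + 1), e k⁆⁆ = e k :=
  hDG.1 (k + 1) k (.inr rfl)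

lemma lie_lie_S_eq_S (hN : 4 ≤ N) (a : ℕ) :
    ⁅⁅e ↑(a + 1), e a⁆, S e (N - 3) ↑(a + 3)⁆ = S e (N - 1) ↑(a + 3) := by
  obtain ⟨M, rfl⟩ : ∃ M, N = M + 4 := ⟨N - 4, by omega⟩
  have hwrap : ∀ b, ((a + 3 + M + 1 + b : ℕ) : Fin (M + 4)) = ↑(a + b) := fun b => by
    rw [show a + 3 + M + 1 + b = a + b + (M + 4) by omega, Nat.cast_add (a + b),
      Fin.natCast_self, add_zero]
  rw [show M + 4 - 3 = M + 1 by omega, show M + 4 - 1 = M + 2 + 1 by omega]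
  refine lie_S_eq_S_of_lie_last e (fun i hi hi' => ?_) ?_
  · rw [lie_lie, hDG.lie_natCast_eq_zero (by omega) (by omega),
      hDG.lie_natCast_eq_zero (by omega) (by omega), lie_zero, lie_zero, sub_zero]
  · rw [← lie_skew, ← lie_skew (e ↑(a + 1)) (e a), lie_neg, neg_neg, S_add_two_natCast,
      S_add_two_natCast, hwrap 0, hwrap 1]
    rfl

lemma lie_add_one_S_card [IsAddTorsionFree L] (hN : 4 ≤ N) (a : ℕ) :
    ⁅e ↑(a + 1), S e N (a : Fin N)⁆ = S e (N + 1) ↑(a + 1) := by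
  obtain ⟨M, rfl⟩ : ∃ M, N = M + 4 := ⟨N - 4, by omega⟩
  set x := e ↑a
  set y := e ↑(a + 1)
  set z := e ↑(a + 2)
  set T := S e (M + 1) ↑(a + 3)
  have hyx : ⁅y, ⁅y, x⁆⁆ = x := by
    simpa only [y, Nat.cast_succ] using hDG.add_one_lie_lie (a : Fin (M + 4))
  have hyz : ⁅y, ⁅y, z⁆⁆ = z := by
    simpa only [y, z, Nat.cast_succ, add_assoc, one_add_one_eq_two]
      using hDG.lie_lie_add_one ((a + 1 : ℕ) : Fin (M + 4))
  have hxz : ⁅x, z⁆ = 0 := hDG.lie_natCast_eq_zero (by omega) (by omega)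
  have hyT : ⁅y, T⁆ = 0 :=
    lie_S_eq_zero e fun i hi hi' => hDG.lie_natCast_eq_zero (by omega) (by omega)
  have huT : ⁅⁅y, x⁆, T⁆ = S e (M + 3) ↑(a + 3) := by
    simpa only [show M + 4 - 3 = M + 1 by omega, show M + 4 - 1 = M + 3 by omega]
      using hDG.lie_lie_S_eq_S hN a
  have hw : ⁅y, ⁅x, ⁅y, z⁆⁆⁆ = 0 := lie_lie_lie_eq_zero_of_lie_lie_self hyx hyz hxz
  calc ⁅y, S e (M + 4) ↑a⁆ = ⁅y, ⁅x, ⁅y, ⁅z, T⁆⁆⁆⁆ := by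
        rw [S_add_two_natCast, S_add_two_natCast, S_add_two_natCast]
    _ = ⁅y, ⁅z, ⁅⁅y, x⁆, T⁆⁆⁆ := lie_lie_lie_lie_eq_lie_lie_lie hyx hyz hxz hyT hw
    _ = S e (M + 4 + 1) ↑(a + 1) := by
        rw [huT, S_add_two_natCast e (M + 3), S_add_two_natCast e (M + 2)]

end DolanGrady

end NestedString

/-- If `e_1,…,e_N` (`N ≥ 4`) satisfy the generalized Dolan–Grady relations,
then `[e_1, S_N(N)] = S_1(N+1)`. -/
theorem bracket_e1_closed_string_N (N : ℕ) (hN : 4 ≤ N) [NeZero N]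
    {L : Type*} [LieRing L] [LieAlgebra ℂ L]
    (e : Fin N → L) (hDG : DolanGrady e) :
    ⁅e (1 : Fin N), S e N ((N : ℕ) : Fin N)⁆ = S e (N + 1) (1 : Fin N) := by
  have := IsAddTorsionFree.of_isTorsionFree ℂ L
  simpa using hDG.lie_add_one_S_card hN 0
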